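/- Let ρ₀ ∈ (0,1), C = {p ∈ ℝ² : ρ₀ ≤ ‖p‖ ≤ 1} and C* = {p ∈ ℝ² : ρ₀ ≤ ‖p‖ < 1}, and let 0 < β < 1. Let (τ_k)_{k≥1} be positive reals with ∑_k τ_k < ∞, A ≥ 0, (f_k)_{k≥0} maps from ℝ² to ℝ³ each continuously differentiable on a neighborhood of C, and (g_k)_{k≥0} continuous fields of symmetric bilinear forms on C, satisfying properties (P1): ‖g_k(p) − (f_k*⟨,⟩)(p)‖ ≤ ‖g_{k+1}(p) − g_k(p)‖ for all p ∈ C; (P2): ‖f_k(p) − f_{k−1}(p)‖ ≤ τ_k for all p ∈ C; (P3): ‖Df_k(p) − Df_{k−1}(p)‖ ≤ τ_k + A·‖g_k(p) − (f_{k−1}*⟨,⟩)(p)‖^{1/2} for all p ∈ C; (P4): for every compact K ⊆ C*, ∑_k (sup_{p∈K} ‖g_k(p) − g_{k−1}(p)‖)^{1/2} < ∞; and suppose the f_k converge uniformly on C to a map f_∞. If in addition (i) there is k₀ such that for all k ≥ k₀, τ_k ≤ (sup_{p∈C} ‖g_k(p) − g_{k−1}(p)‖)^{1/2}, and (ii)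 ∑_k τ_k^{1−β} · (sup_{p∈C} ‖g_k(p) − g_{k−1}(p)‖)^{β/2} < ∞, then f_∞ is β-Hölder on C: there exists M ≥ 0 with ‖f_∞(p) − f_∞(q)‖ ≤ M‖p−q‖^β for all p, q ∈ C. -/

import Mathlib

open scoped RealInnerProductSpace

noncomputable section

abbrev E2 := EuclideanSpace ℝ (Fin 2)
abbrev E3 := EuclideanSpace ℝ (Fin 3)

/-- The norm `‖b‖ = sup_{v ≠ 0} |b(v,v)|/‖v‖²` of a symmetric bilinear form on `ℝ²`. -/
noncomputable def bnorm (b : E2 →ₗ[ℝ] E2 →ₗ[ℝ] ℝ) : ℝ :=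
  ⨆ v : E2, |b v v| / ‖v‖ ^ 2

/-- The pullback metric `(f*⟨,⟩)(p)` of a map `f : ℝ² → ℝ³` at the point `p`,
as a bilinear form on `ℝ²`. -/
noncomputable def pullbackForm (f : E2 → E3) (p : E2) : E2 →ₗ[ℝ] E2 →ₗ[ℝ] ℝ :=
  LinearMap.mk₂ ℝ (fun u v => ⟪fderiv ℝ f p u, fderiv ℝ f p v⟫)
    (fun u u' v => by simp [map_add, inner_add_left])
    (fun c u v => by simp [map_smul, real_inner_smul_left, Finset.mul_sum, mul_assoc])
    (fun u v v' => by simp [map_add, inner_add_right])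
    (fun c u v => by
      simp [map_smul, real_inner_smul_right, Finset.mul_sum])

/-!
Write `S k = sup_C ‖g (k + 1) - g k‖`. The increment `f (k + 2) - f (k + 1)` is bounded by
`τ (k + 2)` by (P2), and by (P1) and (P3) its derivative is bounded by
`τ (k + 2) + A √(2 S (k + 1))`.
Nearby points of the annulus are joined inside it by three segments of total length
`O(‖p - q‖)`, so the derivative bound makes the increment Lipschitz on nearby pairs.
Interpolating `min(a, b) ≤ a ^ (1 - β) b ^ β` between the sup bound and the Lipschitz bound
gives the increment a `β`-Hölder constant `≲ τ + A ^ β τ ^ (1 - β) S ^ (β / 2)`, which is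
summable by (ii). Summing the telescoping series, `f∞` is `β`-Hölder on nearby pairs; on the
remaining pairs it suffices that `f∞` is bounded on the compact set `C`.
-/

section BilinearForm

variable (b c : E2 →ₗ[ℝ] E2 →ₗ[ℝ] ℝ)

-- A continuous majorant of `bnorm`: it keeps suprema of `bnorm` over compact sets away from the
-- junk value of an unbounded `⨆`.
def entrySum : ℝ :=
  ∑ i : Fin 2, ∑ j : Fin 2, |b (EuclideanSpace.single i 1) (EuclideanSpace.single j 1)|

theorem entrySum_nonneg : 0 ≤ entrySum b := by
  unfold entrySum
  positivity

theorem abs_apply_self_le_entrySum_mul (v : E2) : |b v v| ≤ entrySum b * ‖v‖ ^ 2 := by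
  have hv : ∑ i : Fin 2, v i • EuclideanSpace.single i (1 : ℝ) = v := by
    simpa [EuclideanSpace.basisFun_apply] using (EuclideanSpace.basisFun (Fin 2) ℝ).sum_repr v
  have hexpand : b v v = ∑ i : Fin 2, ∑ j : Fin 2,
      v i * v j * b (EuclideanSpace.single i 1) (EuclideanSpace.single j 1) := by
    conv_lhs => rw [← hv]
    simp only [Fin.sum_univ_two, map_add, map_smul, LinearMap.add_apply, LinearMap.smul_apply,
      smul_eq_mul]
    ring
  rw [hexpand, entrySum, Finset.sum_mul]
  refine (Finset.abs_sum_le_sum_abs _ _).trans (Finset.sum_le_sum fun i _ => ?_)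
  rw [Finset.sum_mul]
  refine (Finset.abs_sum_le_sum_abs _ _).trans (Finset.sum_le_sum fun j _ => ?_)
  rw [abs_mul, abs_mul, mul_comm _ (‖v‖ ^ 2), sq]
  gcongr
  · exact PiLp.norm_apply_le v i
  · exact PiLp.norm_apply_le v j

theorem div_le_entrySum (v : E2) : |b v v| / ‖v‖ ^ 2 ≤ entrySum b :=
  div_le_of_le_mul₀ (by positivity) (entrySum_nonneg b) (abs_apply_self_le_entrySum_mul b v)

theorem bddAbove_range_abs_apply_self_div : BddAbove (Set.range fun v : E2 => |b v v| / ‖v‖ ^ 2) :=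
  ⟨entrySum b, Set.forall_mem_range.2 (div_le_entrySum b)⟩

theorem bnorm_nonneg : 0 ≤ bnorm b := by
  unfold bnorm
  simpa using le_ciSup (bddAbove_range_abs_apply_self_div b) 0

theorem bnorm_le_entrySum : bnorm b ≤ entrySum b :=
  ciSup_le (div_le_entrySum b)

theorem bnorm_add_le : bnorm (b + c) ≤ bnorm b + bnorm c := by
  refine ciSup_le fun v => ?_
  calc |(b + c) v v| / ‖v‖ ^ 2 ≤ |b v v| / ‖v‖ ^ 2 + |c v v| / ‖v‖ ^ 2 := by
        rw [← add_div]
        gcongr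
        exact abs_add_le _ _
    _ ≤ bnorm b + bnorm c :=
        add_le_add (le_ciSup (bddAbove_range_abs_apply_self_div b) v)
          (le_ciSup (bddAbove_range_abs_apply_self_div c) v)

theorem bnorm_sub_le_two_mul {a : E2 →ₗ[ℝ] E2 →ₗ[ℝ] ℝ} (h : bnorm (b - c) ≤ bnorm (a - b)) :
    bnorm (a - c) ≤ 2 * bnorm (a - b) := by
  have hsplit : a - c = (a - b) + (b - c) := by abel
  linarith [hsplit ▸ bnorm_add_le (a - b) (b - c)]

theorem bnorm_le_iSup {K : Set E2} (hK : IsCompact K) {G : E2 → E2 →ₗ[ℝ] E2 →ₗ[ℝ] ℝ}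
    (hG : ∀ u v, ContinuousOn (fun p => G p u v) K) {x : E2} (hx : x ∈ K) :
    bnorm (G x) ≤ ⨆ p : K, bnorm (G p) := by
  have hcont : ContinuousOn (fun p => entrySum (G p)) K :=
    continuousOn_finsetSum _ fun i _ => continuousOn_finsetSum _ fun j _ => (hG _ _).abs
  obtain ⟨M, hM⟩ := hK.exists_bound_of_continuousOn hcont
  refine le_ciSup (f := fun p : K => bnorm (G p)) ⟨M, Set.forall_mem_range.2 fun p => ?_⟩ ⟨x, hx⟩
  exact (bnorm_le_entrySum _).trans ((le_abs_self _).trans (hM p p.2))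

end BilinearForm

theorem norm_fderiv_sub_le_of_bnorm_le {f₀ f₁ : E2 → E3} {g₁ g₂ : E2 →ₗ[ℝ] E2 →ₗ[ℝ] ℝ}
    {x : E2} {τ A s : ℝ} (hA : 0 ≤ A) (hf₀ : DifferentiableAt ℝ f₀ x)
    (hf₁ : DifferentiableAt ℝ f₁ x) (hg : bnorm (g₁ - pullbackForm f₀ x) ≤ bnorm (g₂ - g₁))
    (hDf : ‖fderiv ℝ f₁ x - fderiv ℝ f₀ x‖ ≤ τ + A * √(bnorm (g₂ - pullbackForm f₀ x)))
    (hs : bnorm (g₂ - g₁) ≤ s) :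
    ‖fderiv ℝ (fun y => f₁ y - f₀ y) x‖ ≤ τ + A * √2 * √s := by
  have hb : bnorm (g₂ - pullbackForm f₀ x) ≤ 2 * s :=
    (bnorm_sub_le_two_mul _ _ hg).trans (by linarith)
  rw [fderiv_fun_sub hf₁ hf₀, mul_assoc, ← Real.sqrt_mul zero_le_two]
  exact hDf.trans (by gcongr)

theorem norm_sub_le_of_tendsto_of_norm_sub_sub_le {X G : Type*} [NormedAddCommGroup G]
    {u : ℕ → X → G} {v : X → G} {p q : X} {c : ℕ → ℝ} {M₀ w : ℝ}
    (hp : Filter.Tendsto (fun n => u n p) Filter.atTop (nhds (v p)))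
    (hq : Filter.Tendsto (fun n => u n q) Filter.atTop (nhds (v q))) (hc : Summable c)
    (h₀ : ‖u 0 p - u 0 q‖ ≤ M₀ * w)
    (hinc : ∀ n, ‖(u (n + 1) p - u n p) - (u (n + 1) q - u n q)‖ ≤ c n * w) :
    ‖v p - v q‖ ≤ (M₀ + ∑' n, c n) * w := by
  have hdist := dist_le_tsum_of_dist_le_of_tendsto₀ (fun n => c n * w)
    (fun n => by rw [dist_comm, dist_eq_norm, sub_sub_sub_comm]; exact hinc n)
    (hc.mul_right w) (hp.sub hq)
  rw [dist_eq_norm, tsum_mul_right] at hdist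
  linarith [norm_le_norm_add_norm_sub (u 0 p - u 0 q) (v p - v q)]

theorem exists_norm_sub_le_mul_rpow_of_local {E G : Type*} [SeminormedAddCommGroup E]
    [SeminormedAddCommGroup G] {S : Set E} {u : E → G} {δ M β : ℝ} (hS : IsCompact S)
    (hu : ContinuousOn u S) (hδ : 0 < δ) (hM : 0 ≤ M) (hβ : 0 ≤ β)
    (hloc : ∀ p ∈ S, ∀ q ∈ S, ‖p - q‖ ≤ δ → ‖u p - u q‖ ≤ M * ‖p - q‖ ^ β) :
    ∃ M', 0 ≤ M' ∧ ∀ p ∈ S, ∀ q ∈ S, ‖u p - u q‖ ≤ M' * ‖p - q‖ ^ β := by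
  obtain ⟨B, hB⟩ := hS.exists_bound_of_continuousOn hu
  refine ⟨max M (2 * B / δ ^ β), le_max_of_le_left hM, fun p hp q hq => ?_⟩
  rcases le_or_gt ‖p - q‖ δ with hnear | hfar
  · exact (hloc p hp q hq hnear).trans
      (mul_le_mul_of_nonneg_right (le_max_left _ _) (by positivity))
  have h2B : ‖u p - u q‖ ≤ 2 * B := by linarith [norm_sub_le (u p) (u q), hB p hp, hB q hq]
  have hδβ : 0 < δ ^ β := Real.rpow_pos_of_pos hδ β
  calc ‖u p - u q‖ ≤ 2 * B / δ ^ β * δ ^ β := by rwa [div_mul_cancel₀ _ hδβ.ne']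
    _ ≤ 2 * B / δ ^ β * ‖p - q‖ ^ β := by
        have : 0 ≤ 2 * B / δ ^ β := div_nonneg ((norm_nonneg _).trans h2B) hδβ.le
        gcongr
    _ ≤ max M (2 * B / δ ^ β) * ‖p - q‖ ^ β := by
        gcongr
        exact le_max_right _ _

section Annulus

variable {E F : Type*} [NormedAddCommGroup E] [NormedSpace ℝ E]
  [NormedAddCommGroup F] [NormedSpace ℝ F]

def closedAnnulus (ρ : ℝ) : Set E := {x | ρ ≤ ‖x‖ ∧ ‖x‖ ≤ 1}

theorem isCompact_closedAnnulus [FiniteDimensional ℝ E] (ρ : ℝ) :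
    IsCompact (closedAnnulus (E := E) ρ) := by
  refine (isCompact_closedBall (0 : E) 1).of_isClosed_subset ?_ fun x hx => by simpa using hx.2
  exact (isClosed_le continuous_const continuous_norm).inter
    (isClosed_le continuous_norm continuous_const)

theorem segment_subset_closedAnnulus {ρ : ℝ} {a b : E} (ha : ‖a‖ ≤ 1) (hb : ‖b‖ ≤ 1)
    (h : ρ + ‖a - b‖ ≤ ‖a‖) : segment ℝ a b ⊆ closedAnnulus ρ := by
  intro x hx
  have hxa : ‖x - a‖ ≤ ‖a - b‖ := by
    simpa [dist_eq_norm] using segment_subset_closedBall_left a b hx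
  have hx1 : x ∈ Metric.closedBall (0 : E) 1 :=
    (convex_closedBall (0 : E) 1).segment_subset (by simpa using ha) (by simpa using hb) hx
  exact ⟨by linarith [norm_sub_norm_le a x, norm_sub_rev a x], by simpa using hx1⟩

theorem exists_three_segments_closedAnnulus {ρ : ℝ} (hρ : 0 < ρ) (hρ1 : ρ < 1) {p q : E}
    (hp : p ∈ closedAnnulus ρ) (hq : q ∈ closedAnnulus ρ) (hpq : ‖p - q‖ ≤ ρ * (1 - ρ) / 8) :
    ∃ a b : E, segment ℝ p a ⊆ closedAnnulus ρ ∧ segment ℝ a b ⊆ closedAnnulus ρ ∧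
      segment ℝ b q ⊆ closedAnnulus ρ ∧ ‖p - a‖ + ‖a - b‖ + ‖b - q‖ ≤ 6 / ρ * ‖p - q‖ := by
  obtain ⟨hp₀, hp₁⟩ := hp
  obtain ⟨hq₀, hq₁⟩ := hq
  set d := ‖p - q‖
  have hd : 0 ≤ d := norm_nonneg _
  have hqp : ‖q‖ ≤ ‖p‖ + d := by linarith [norm_sub_norm_le q p, norm_sub_rev q p]
  set s := 2 * d / ρ
  have hsρ : s * ρ = 2 * d := div_mul_cancel₀ _ hρ.ne'
  have hs : s ≤ (1 - ρ) / 4 := by rw [div_le_iff₀ hρ]; linarith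
  have hs0 : 0 ≤ s := by positivity
  have hlen : 6 / ρ * d = 3 * s := by field_simp; linarith
  rw [hlen]
  by_cases hfar : ρ + d ≤ ‖p‖
  · refine ⟨p, q, ?_, segment_subset_closedAnnulus hp₁ hq₁ hfar, ?_, ?_⟩
    · simpa [segment_same] using ⟨hp₀, hp₁⟩
    · simpa [segment_same] using ⟨hq₀, hq₁⟩
    · simp only [sub_self, norm_zero, zero_add, add_zero]
      nlinarith
  -- near the inner circle the chord can leave the annulus, so first push both points outwards
  set t := 1 + s
  have hnp : ‖t • p‖ = t * ‖p‖ := by rw [norm_smul, Real.norm_of_nonneg (by linarith)]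
  have hnq : ‖t • q‖ = t * ‖q‖ := by rw [norm_smul, Real.norm_of_nonneg (by linarith)]
  have htp : t * ‖p‖ ≤ 1 := by nlinarith
  have htq : t * ‖q‖ ≤ 1 := by nlinarith
  have hradial : ∀ x : E, ‖t • x - x‖ = s * ‖x‖ := fun x => by
    rw [show t • x - x = s • x by module, norm_smul, Real.norm_of_nonneg hs0]
  have hchord : ‖t • p - t • q‖ = t * d := by
    rw [← smul_sub, norm_smul, Real.norm_of_nonneg (by linarith)]
  refine ⟨t • p, t • q, ?_, ?_, ?_, ?_⟩
  · rw [segment_symm]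
    exact segment_subset_closedAnnulus (by rwa [hnp]) hp₁ (by rw [hnp, hradial]; nlinarith)
  · exact segment_subset_closedAnnulus (by rwa [hnp]) (by rwa [hnq])
      (by rw [hnp, hchord]; nlinarith)
  · exact segment_subset_closedAnnulus (by rwa [hnq]) hq₁ (by rw [hnq, hradial]; nlinarith)
  · rw [norm_sub_rev, hradial, hchord, hradial]
    nlinarith

theorem norm_image_sub_le_of_segment_subset {S : Set E} {h : E → F} {L : ℝ}
    (hd : ∀ x ∈ S, DifferentiableAt ℝ h x) (hL : ∀ x ∈ S, ‖fderiv ℝ h x‖ ≤ L) {x y : E}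
    (hxy : segment ℝ x y ⊆ S) : ‖h x - h y‖ ≤ L * ‖x - y‖ := by
  rw [norm_sub_rev (h x), norm_sub_rev x]
  exact (convex_segment x y).norm_image_sub_le_of_norm_fderiv_le (fun z hz => hd z (hxy hz))
    (fun z hz => hL z (hxy hz)) (left_mem_segment ℝ x y) (right_mem_segment ℝ x y)

theorem norm_image_sub_le_closedAnnulus {ρ L : ℝ} (hρ : 0 < ρ) (hρ1 : ρ < 1) {h : E → F}
    (hd : ∀ x ∈ closedAnnulus ρ, DifferentiableAt ℝ h x)
    (hL : ∀ x ∈ closedAnnulus ρ, ‖fderiv ℝ h x‖ ≤ L) {p q : E}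
    (hp : p ∈ closedAnnulus ρ) (hq : q ∈ closedAnnulus ρ) (hpq : ‖p - q‖ ≤ ρ * (1 - ρ) / 8) :
    ‖h p - h q‖ ≤ 6 / ρ * L * ‖p - q‖ := by
  obtain ⟨a, b, hpa, hab, hbq, hlen⟩ := exists_three_segments_closedAnnulus hρ hρ1 hp hq hpq
  have hL0 : 0 ≤ L := (norm_nonneg _).trans (hL p hp)
  calc ‖h p - h q‖ ≤ ‖h p - h a‖ + ‖h a - h b‖ + ‖h b - h q‖ := by
        linarith [norm_sub_le_norm_sub_add_norm_sub (h p) (h b) (h q),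
          norm_sub_le_norm_sub_add_norm_sub (h p) (h a) (h b)]
    _ ≤ L * (‖p - a‖ + ‖a - b‖ + ‖b - q‖) := by
        linarith [norm_image_sub_le_of_segment_subset hd hL hpa,
          norm_image_sub_le_of_segment_subset hd hL hab,
          norm_image_sub_le_of_segment_subset hd hL hbq]
    _ ≤ 6 / ρ * L * ‖p - q‖ := by nlinarith

theorem le_rpow_one_sub_mul_rpow {x a y β : ℝ} (hx : 0 ≤ x) (hxa : x ≤ a) (hxy : x ≤ y)
    (hβ0 : 0 ≤ β) (hβ1 : β ≤ 1) : x ≤ a ^ (1 - β) * y ^ β := by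
  calc x = x ^ (1 - β) * x ^ β := by
        rw [← Real.rpow_add' hx (by simp), sub_add_cancel, Real.rpow_one]
    _ ≤ a ^ (1 - β) * y ^ β :=
        mul_le_mul (Real.rpow_le_rpow hx hxa (by linarith)) (Real.rpow_le_rpow hx hxy hβ0)
          (by positivity) (Real.rpow_nonneg (hx.trans hxa) _)

theorem norm_image_sub_le_rpow_closedAnnulus {ρ T L β : ℝ} (hρ : 0 < ρ) (hρ1 : ρ < 1)
    (hβ0 : 0 ≤ β) (hβ1 : β ≤ 1) {h : E → F}
    (hd : ∀ x ∈ closedAnnulus ρ, DifferentiableAt ℝ h x)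
    (hT : ∀ x ∈ closedAnnulus ρ, ‖h x‖ ≤ T) (hL : ∀ x ∈ closedAnnulus ρ, ‖fderiv ℝ h x‖ ≤ L)
    {p q : E} (hp : p ∈ closedAnnulus ρ) (hq : q ∈ closedAnnulus ρ)
    (hpq : ‖p - q‖ ≤ ρ * (1 - ρ) / 8) :
    ‖h p - h q‖ ≤ 12 / ρ * (T ^ (1 - β) * L ^ β) * ‖p - q‖ ^ β := by
  set κ := 12 / ρ
  have hκ : 2 ≤ κ := by rw [le_div_iff₀ hρ]; linarith
  have hT0 : 0 ≤ T := (norm_nonneg _).trans (hT p hp)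
  have hL0 : 0 ≤ L := (norm_nonneg _).trans (hL p hp)
  have hsup : ‖h p - h q‖ ≤ κ * T :=
    (norm_sub_le _ _).trans (by nlinarith [hT p hp, hT q hq])
  have hlip : ‖h p - h q‖ ≤ κ * (L * ‖p - q‖) := by
    have h6 : 6 / ρ * L * ‖p - q‖ ≤ κ * (L * ‖p - q‖) := by
      rw [mul_assoc]
      exact mul_le_mul_of_nonneg_right (div_le_div_of_nonneg_right (by norm_num) hρ.le)
        (by positivity)
    exact (norm_image_sub_le_closedAnnulus hρ hρ1 hd hL hp hq hpq).trans h6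
  have hκβ : κ ^ (1 - β) * κ ^ β = κ := by
    rw [← Real.rpow_add' (by linarith) (by simp), sub_add_cancel, Real.rpow_one]
  calc ‖h p - h q‖ ≤ (κ * T) ^ (1 - β) * (κ * (L * ‖p - q‖)) ^ β :=
        le_rpow_one_sub_mul_rpow (norm_nonneg _) hsup hlip hβ0 hβ1
    _ = κ * (T ^ (1 - β) * L ^ β) * ‖p - q‖ ^ β := by
        rw [Real.mul_rpow (by linarith) hT0, Real.mul_rpow (by linarith) (by positivity),
          Real.mul_rpow hL0 (norm_nonneg _)]
        linear_combination (T ^ (1 - β) * L ^ β * ‖p - q‖ ^ β) * hκβ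

theorem exists_norm_image_sub_le_rpow_closedAnnulus [FiniteDimensional ℝ E] {ρ β : ℝ}
    (hρ : 0 < ρ) (hρ1 : ρ < 1) (hβ0 : 0 ≤ β) (hβ1 : β ≤ 1) {h : E → F} {U : Set E}
    (hU : IsOpen U) (hAU : closedAnnulus ρ ⊆ U) (hh : ContDiffOn ℝ 1 h U) :
    ∃ M, 0 ≤ M ∧ ∀ p ∈ closedAnnulus ρ, ∀ q ∈ closedAnnulus ρ, ‖p - q‖ ≤ ρ * (1 - ρ) / 8 →
      ‖h p - h q‖ ≤ M * ‖p - q‖ ^ β := by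
  have hd : ∀ x ∈ closedAnnulus ρ, DifferentiableAt ℝ h x := fun x hx =>
    (hh.differentiableOn one_ne_zero).differentiableAt (hU.mem_nhds (hAU hx))
  obtain ⟨T, hT⟩ := (isCompact_closedAnnulus ρ).exists_bound_of_continuousOn
    (fun x hx => (hd x hx).continuousAt.continuousWithinAt)
  obtain ⟨L, hL⟩ := (isCompact_closedAnnulus ρ).exists_bound_of_continuousOn
    ((hh.continuousOn_fderiv_of_isOpen hU le_rfl).mono hAU)
  refine ⟨12 / ρ * (max T 0 ^ (1 - β) * max L 0 ^ β), by positivity, fun p hp q hq hpq => ?_⟩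
  exact norm_image_sub_le_rpow_closedAnnulus hρ hρ1 hβ0 hβ1 hd
    (fun x hx => (hT x hx).trans (le_max_left _ _)) (fun x hx => (hL x hx).trans (le_max_left _ _))
    hp hq hpq

end Annulus

theorem rpow_one_sub_mul_add_sqrt_rpow_le {t s a β : ℝ} (ht : 0 ≤ t) (hs : 0 ≤ s) (ha : 0 ≤ a)
    (hβ0 : 0 ≤ β) (hβ1 : β ≤ 1) :
    t ^ (1 - β) * (t + a * √s) ^ β ≤ t + a ^ β * (t ^ (1 - β) * s ^ (β / 2)) := by
  have hsplit : (t + a * √s) ^ β ≤ t ^ β + a ^ β * s ^ (β / 2) := by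
    refine (Real.rpow_add_le_add_rpow ht (by positivity) hβ0 hβ1).trans_eq ?_
    rw [Real.mul_rpow ha (Real.sqrt_nonneg s), Real.sqrt_eq_rpow, ← Real.rpow_mul hs]
    ring_nf
  have htt : t ^ (1 - β) * t ^ β = t := by
    rw [← Real.rpow_add' ht (by simp), sub_add_cancel, Real.rpow_one]
  calc t ^ (1 - β) * (t + a * √s) ^ β ≤ t ^ (1 - β) * (t ^ β + a ^ β * s ^ (β / 2)) :=
        mul_le_mul_of_nonneg_left hsplit (Real.rpow_nonneg ht _)
    _ = t + a ^ β * (t ^ (1 - β) * s ^ (β / 2)) := by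
        linear_combination htt

theorem summable_rpow_one_sub_mul_add_sqrt_rpow {t s : ℕ → ℝ} {a β : ℝ} (ht : ∀ k, 0 ≤ t k)
    (hs : ∀ k, 0 ≤ s k) (ha : 0 ≤ a) (hβ0 : 0 ≤ β) (hβ1 : β ≤ 1) (hts : Summable t)
    (htsβ : Summable fun k => t k ^ (1 - β) * s k ^ (β / 2)) :
    Summable fun k => t k ^ (1 - β) * (t k + a * √(s k)) ^ β :=
  Summable.of_nonneg_of_le (fun k => by have := ht k; positivity)
    (fun k => rpow_one_sub_mul_add_sqrt_rpow_le (ht k) (hs k) ha hβ0 hβ1)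
    (hts.add (htsβ.mul_left _))

theorem stmt2_general (ρ₀ : ℝ) (hρ₀ : 0 < ρ₀) (hρ₀1 : ρ₀ < 1)
    (β : ℝ) (hβ0 : 0 < β) (hβ1 : β < 1)
    (C : Set E2)
    (hC : C = {p : E2 | ρ₀ ≤ ‖p‖ ∧ ‖p‖ ≤ 1})
    (τ : ℕ → ℝ) (hτpos : ∀ k, 0 < τ k) (hτsum : Summable τ)
    (A : ℝ) (hA : 0 ≤ A)
    (f : ℕ → E2 → E3)
    (hfC1 : ∀ k, ∃ U : Set E2, IsOpen U ∧ C ⊆ U ∧ ContDiffOn ℝ 1 (f k) U)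
    (g : ℕ → E2 → (E2 →ₗ[ℝ] E2 →ₗ[ℝ] ℝ))
    (hgcont : ∀ k, ∀ u v : E2, ContinuousOn (fun p => g k p u v) C)
    -- (P1)
    (hP1 : ∀ k : ℕ, ∀ p ∈ C,
      bnorm (g (k + 1) p - pullbackForm (f (k + 1)) p) ≤ bnorm (g (k + 2) p - g (k + 1) p))
    -- (P2)
    (hP2 : ∀ k : ℕ, ∀ p ∈ C, ‖f (k + 1) p - f k p‖ ≤ τ (k + 1))
    -- (P3)
    (hP3 : ∀ k : ℕ, ∀ p ∈ C,
      ‖fderiv ℝ (f (k + 1)) p - fderiv ℝ (f k) p‖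
        ≤ τ (k + 1) + A * Real.sqrt (bnorm (g (k + 1) p - pullbackForm (f k) p)))
    -- the uniform limit on C
    (finf : E2 → E3)
    (hconv : TendstoUniformlyOn f finf Filter.atTop C)
    -- condition (ii)
    (hii : Summable (fun k : ℕ =>
      τ (k + 1) ^ (1 - β) * (⨆ p : C, bnorm (g (k + 1) (p : E2) - g k (p : E2))) ^ (β / 2))) :
    ∃ M : ℝ, 0 ≤ M ∧ ∀ p ∈ C, ∀ q ∈ C, ‖finf p - finf q‖ ≤ M * ‖p - q‖ ^ β := by
  obtain rfl : C = closedAnnulus ρ₀ := hC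
  have hdiff : ∀ k, ∀ x ∈ closedAnnulus ρ₀, DifferentiableAt ℝ (f k) x := fun k x hx => by
    obtain ⟨U, hU, hCU, hfU⟩ := hfC1 k
    exact (hfU.differentiableOn one_ne_zero).differentiableAt (hU.mem_nhds (hCU hx))
  set S : ℕ → ℝ := fun k => ⨆ p : closedAnnulus (E := E2) ρ₀, bnorm (g (k + 1) p - g k p)
  have hS : ∀ k, ∀ x ∈ closedAnnulus ρ₀, bnorm (g (k + 1) x - g k x) ≤ S k := fun k x hx =>
    bnorm_le_iSup (G := fun p => g (k + 1) p - g k p) (isCompact_closedAnnulus ρ₀)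
      (fun u v => (hgcont (k + 1) u v).sub (hgcont k u v)) hx
  set c : ℕ → ℝ := fun j =>
    12 / ρ₀ * (τ (j + 2) ^ (1 - β) * (τ (j + 2) + A * √2 * √(S (j + 1))) ^ β)
  have hc : Summable c := (summable_rpow_one_sub_mul_add_sqrt_rpow (fun k => (hτpos _).le)
    (fun k => Real.iSup_nonneg fun _ => bnorm_nonneg _) (by positivity) hβ0.le hβ1.le
    ((summable_nat_add_iff 2).mpr hτsum) ((summable_nat_add_iff 1).mpr hii)).mul_left _
  have hc0 : ∀ j, 0 ≤ c j := fun j => by have := hτpos (j + 2); positivity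
  obtain ⟨U₁, hU₁, hAU₁, hf₁⟩ := hfC1 1
  obtain ⟨M₁, hM₁, hf₁M₁⟩ :=
    exists_norm_image_sub_le_rpow_closedAnnulus hρ₀ hρ₀1 hβ0.le hβ1.le hU₁ hAU₁ hf₁
  refine exists_norm_sub_le_mul_rpow_of_local (M := M₁ + ∑' j, c j) (isCompact_closedAnnulus ρ₀)
    (hconv.continuousOn (Filter.Frequently.of_forall fun n x hx =>
      (hdiff n x hx).continuousAt.continuousWithinAt))
    (by nlinarith : 0 < ρ₀ * (1 - ρ₀) / 8) (add_nonneg hM₁ (tsum_nonneg hc0)) hβ0.le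
    fun p hp q hq hpq => ?_
  refine norm_sub_le_of_tendsto_of_norm_sub_sub_le (u := fun n => f (n + 1))
    ((hconv.tendsto_at hp).comp (Filter.tendsto_add_atTop_nat 1))
    ((hconv.tendsto_at hq).comp (Filter.tendsto_add_atTop_nat 1)) hc (hf₁M₁ p hp q hq hpq)
    fun j => ?_
  exact norm_image_sub_le_rpow_closedAnnulus hρ₀ hρ₀1 hβ0.le hβ1.le
    (fun x hx => (hdiff _ x hx).sub (hdiff _ x hx)) (fun x hx => hP2 (j + 1) x hx)
    (fun x hx => norm_fderiv_sub_le_of_bnorm_le hA (hdiff _ x hx) (hdiff _ x hx) (hP1 j x hx)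
      (hP3 (j + 1) x hx) (hS (j + 1) x hx)) hp hq hpq

/-- Hölder regularity of the limit map (Proposition 2.2): under (P1)–(P4) and the two
additional conditions (i) and (ii), the uniform limit `f∞` of the sequence `(f_k)` is
`β`-Hölder on the closed annulus `C`. -/
theorem stmt2 (ρ₀ : ℝ) (hρ₀ : 0 < ρ₀) (hρ₀1 : ρ₀ < 1)
    (β : ℝ) (hβ0 : 0 < β) (hβ1 : β < 1)
    (C Cstar : Set E2)
    (hC : C = {p : E2 | ρ₀ ≤ ‖p‖ ∧ ‖p‖ ≤ 1})
    (hCstar : Cstar = {p : E2 | ρ₀ ≤ ‖p‖ ∧ ‖p‖ < 1})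
    (τ : ℕ → ℝ) (hτpos : ∀ k, 0 < τ k) (hτsum : Summable τ)
    (A : ℝ) (hA : 0 ≤ A)
    (f : ℕ → E2 → E3)
    (hfC1 : ∀ k, ∃ U : Set E2, IsOpen U ∧ C ⊆ U ∧ ContDiffOn ℝ 1 (f k) U)
    (g : ℕ → E2 → (E2 →ₗ[ℝ] E2 →ₗ[ℝ] ℝ))
    (hgsymm : ∀ k, ∀ p ∈ C, ∀ u v : E2, g k p u v = g k p v u)
    (hgcont : ∀ k, ∀ u v : E2, ContinuousOn (fun p => g k p u v) C)
    -- (P1)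
    (hP1 : ∀ k : ℕ, ∀ p ∈ C,
      bnorm (g (k + 1) p - pullbackForm (f (k + 1)) p) ≤ bnorm (g (k + 2) p - g (k + 1) p))
    -- (P2)
    (hP2 : ∀ k : ℕ, ∀ p ∈ C, ‖f (k + 1) p - f k p‖ ≤ τ (k + 1))
    -- (P3)
    (hP3 : ∀ k : ℕ, ∀ p ∈ C,
      ‖fderiv ℝ (f (k + 1)) p - fderiv ℝ (f k) p‖
        ≤ τ (k + 1) + A * Real.sqrt (bnorm (g (k + 1) p - pullbackForm (f k) p)))
    -- (P4)
    (hP4 : ∀ K : Set E2, K ⊆ Cstar → IsCompact K →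
      Summable (fun k : ℕ => Real.sqrt (⨆ p : K, bnorm (g (k + 1) (p : E2) - g k (p : E2)))))
    -- the uniform limit on C
    (finf : E2 → E3)
    (hconv : TendstoUniformlyOn f finf Filter.atTop C)
    -- condition (i)
    (hi : ∃ k₀ : ℕ, ∀ k : ℕ, k₀ ≤ k →
      τ (k + 1) ≤ Real.sqrt (⨆ p : C, bnorm (g (k + 1) (p : E2) - g k (p : E2))))
    -- condition (ii)
    (hii : Summable (fun k : ℕ =>
      τ (k + 1) ^ (1 - β) * (⨆ p : C, bnorm (g (k + 1) (p : E2) - g k (p : E2))) ^ (β / 2))) :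
    ∃ M : ℝ, 0 ≤ M ∧ ∀ p ∈ C, ∀ q ∈ C, ‖finf p - finf q‖ ≤ M * ‖p - q‖ ^ β :=
  stmt2_general ρ₀ hρ₀ hρ₀1 β hβ0 hβ1 C hC τ hτpos hτsum A hA f hfC1 g hgcont hP1 hP2 hP3 finf hconv
    hii
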